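/- arXiv:2203.02904 — 7 statements merged into one kernel-verified Lean document; each statement's English description precedes it below -/
import Mathlib

section
/- Let X = {2^n : n ∈ ℕ, n ≥ 1} and Y = X ∪ {2^n + 1 : n ∈ ℕ, n ≥ 1}, both regarded as metric subspaces of ℝ. Then (1) the correspondence R = {(2^n, 2^n) : n ≥ 1} ∪ {(2^n, 2^n + 1) : n ≥ 1} between X and Y satisfies dis R ≤ 1, so 2·d_GH(X,Y) ≤ 1 < ∞; and (2) every bijection f : X → Y has dis f = ∞. In particular, X and Y have the same cardinality and finite Gromov–Hausdorff distance, yet no bijection between them has finite distortion. -/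
open ENNReal

/-- A correspondence between `A` and `B`: a relation whose projections are surjective. -/
def IsCorr {A B : Type*} (R : Set (A × B)) : Prop :=
  (∀ a, ∃ b, (a, b) ∈ R) ∧ ∀ b, ∃ a, (a, b) ∈ R

/-- Distortion of a relation between metric spaces, a value in `[0,∞]`. -/
noncomputable def disMS {A B : Type*} [MetricSpace A] [MetricSpace B]
    (σ : Set (A × B)) : ℝ≥0∞ :=
  ⨆ p ∈ σ, ⨆ q ∈ σ, ENNReal.ofReal |dist p.1 q.1 - dist p.2 q.2|

/-- `X = {2^n : n ≥ 1} ⊆ ℝ`. -/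
def Xset : Set ℝ := {x | ∃ n : ℕ, 1 ≤ n ∧ x = 2 ^ n}

/-- `Y = X ∪ {2^n + 1 : n ≥ 1} ⊆ ℝ`. -/
def Yset : Set ℝ := Xset ∪ {x | ∃ n : ℕ, 1 ≤ n ∧ x = 2 ^ n + 1}

/-!
The correspondence `shiftCorr` moves every point by `0` or `1`, so it distorts distances by at
most `1`. If a bijection `f : X ≃ Y` had finite distortion `M`, then `f⁻¹` would send `2ⁿ` and
`2ⁿ + 1` to distinct points of `X` at distance at most `1 + M`. Two distinct powers of two are at
distance at least half of each of them, so the infinite set `f⁻¹(X) ⊆ X` would lie below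
`2 (1 + M)`, which leaves only finitely many powers of two.
-/

open Set

noncomputable def distortion {α β : Type*} [PseudoMetricSpace α] [PseudoMetricSpace β]
    (f : α → β) : ℝ≥0∞ :=
  ⨆ a, ⨆ a', ENNReal.ofReal |dist (f a) (f a') - dist a a'|

lemma dist_le_dist_add_distortion {α β : Type*} [PseudoMetricSpace α] [PseudoMetricSpace β]
    {f : α → β} (h : distortion f ≠ ⊤) (a a' : α) :
    dist a a' ≤ dist (f a) (f a') + (distortion f).toReal := by
  have : |dist (f a) (f a') - dist a a'| ≤ (distortion f).toReal :=
    (ofReal_le_iff_le_toReal h).mp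
      (le_iSup₂ (f := fun a a' => ENNReal.ofReal |dist (f a) (f a') - dist a a'|) a a')
  linarith [neg_abs_le (dist (f a) (f a') - dist a a')]

lemma Xset_subset_range_pow : Xset ⊆ range ((2 : ℝ) ^ ·) := by
  rintro _ ⟨n, -, rfl⟩
  exact ⟨n, rfl⟩

lemma infinite_Xset : Xset.Infinite := by
  refine infinite_of_not_bddAbove fun ⟨C, hC⟩ => ?_
  obtain ⟨n, hn⟩ := pow_unbounded_of_one_lt C one_lt_two
  have : (2 : ℝ) ^ n ≤ 2 ^ (n + 1) := pow_le_pow_right₀ one_le_two n.le_succ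
  exact (hn.trans_le this).not_ge (hC ⟨n + 1, n.succ_pos, rfl⟩)

lemma mk_Xset : Cardinal.mk Xset = Cardinal.aleph0 :=
  have := ((countable_range _).mono Xset_subset_range_pow).to_subtype
  have := infinite_Xset.to_subtype
  Cardinal.mk_eq_aleph0 _

lemma mk_Yset : Cardinal.mk Yset = Cardinal.aleph0 := by
  have hcount : Yset.Countable := by
    refine ((countable_range _).mono Xset_subset_range_pow).union
      ((countable_range ((2 : ℝ) ^ · + 1)).mono ?_)
    rintro _ ⟨n, -, rfl⟩
    exact ⟨n, rfl⟩
  have := hcount.to_subtype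
  have := (infinite_Xset.mono subset_union_left : Yset.Infinite).to_subtype
  exact Cardinal.mk_eq_aleph0 _

lemma finite_Xset_inter_Iic (C : ℝ) : (Xset ∩ Iic C).Finite := by
  refine ((finite_Iic ⌊C⌋₊).image ((2 : ℝ) ^ ·)).subset ?_
  rintro _ ⟨⟨n, -, rfl⟩, hn⟩
  refine ⟨n, Nat.le_floor ?_, rfl⟩
  have : (n : ℝ) < 2 ^ n := by exact_mod_cast Nat.lt_two_pow_self
  exact this.le.trans hn

lemma two_pow_le_two_mul_dist {j k : ℕ} (hjk : j ≠ k) :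
    (2 : ℝ) ^ j ≤ 2 * dist ((2 : ℝ) ^ j) (2 ^ k) := by
  have hj := pow_pos (two_pos (α := ℝ)) j
  have hk := pow_pos (two_pos (α := ℝ)) k
  rw [Real.dist_eq]
  rcases hjk.lt_or_gt with hlt | hlt
  · have : (2 : ℝ) ^ (j + 1) ≤ 2 ^ k := pow_le_pow_right₀ one_le_two hlt
    rw [pow_succ] at this
    rw [abs_sub_comm, abs_of_pos (by linarith)]
    linarith
  · have : (2 : ℝ) ^ (k + 1) ≤ 2 ^ j := pow_le_pow_right₀ one_le_two hlt
    rw [pow_succ] at this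
    rw [abs_of_pos (by linarith)]
    linarith

lemma le_two_mul_dist_of_mem_Xset {x x' : ℝ} (hx : x ∈ Xset) (hx' : x' ∈ Xset) (hne : x ≠ x') :
    x ≤ 2 * dist x x' := by
  obtain ⟨⟨j, -, rfl⟩, ⟨k, -, rfl⟩⟩ := And.intro hx hx'
  exact two_pow_le_two_mul_dist (by rintro rfl; exact hne rfl)

lemma coe_symm_le_of_distortion_ne_top {f : Xset ≃ Yset} (h : distortion f ≠ ⊤) {y : Yset}
    (hy : (y : ℝ) ∈ Xset) : (f.symm y : ℝ) ≤ 2 * (1 + (distortion f).toReal) := by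
  obtain ⟨n, hn, hyn⟩ := hy
  let y' : Yset := ⟨y + 1, Or.inr ⟨n, hn, by rw [hyn]⟩⟩
  have hne : (f.symm y : ℝ) ≠ f.symm y' := fun heq =>
    by simpa [y'] using congrArg Subtype.val (f.symm.injective (Subtype.ext heq))
  calc (f.symm y : ℝ) ≤ 2 * dist (f.symm y) (f.symm y') :=
        le_two_mul_dist_of_mem_Xset (f.symm y).2 (f.symm y').2 hne
    _ ≤ 2 * (dist y y' + (distortion f).toReal) := by
        gcongr
        simpa using dist_le_dist_add_distortion h (f.symm y) (f.symm y')
    _ = 2 * (1 + (distortion f).toReal) := by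
        simp [y', Subtype.dist_eq]

lemma distortion_eq_top (f : Xset ≃ Yset) : distortion f = ⊤ := by
  by_contra h
  have := infinite_Xset.to_subtype
  let g : Xset → ℝ := fun x => f.symm (inclusion subset_union_left x)
  have hg : g.Injective :=
    Subtype.val_injective.comp (f.symm.injective.comp (inclusion_injective _))
  refine (finite_Xset_inter_Iic (2 * (1 + (distortion f).toReal))).not_infinite
    ((infinite_range_of_injective hg).mono ?_)
  rintro _ ⟨x, rfl⟩
  exact ⟨(f.symm _).2, coe_symm_le_of_distortion_ne_top h x.2⟩

def shiftCorr : Set (Xset × Yset) := {p | (p.2 : ℝ) = p.1 ∨ (p.2 : ℝ) = p.1 + 1}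

lemma isCorr_shiftCorr : IsCorr shiftCorr := by
  constructor
  · rintro ⟨x, hx⟩
    exact ⟨⟨x, Or.inl hx⟩, Or.inl rfl⟩
  · rintro ⟨y, hy | ⟨n, hn, rfl⟩⟩
    · exact ⟨⟨y, hy⟩, Or.inl rfl⟩
    · exact ⟨⟨2 ^ n, n, hn, rfl⟩, Or.inr rfl⟩

lemma abs_dist_sub_dist_le_one {a a' b b' : ℝ} (h : b - a ∈ Icc 0 1) (h' : b' - a' ∈ Icc 0 1) :
    |dist a a' - dist b b'| ≤ 1 := by
  simp only [Real.dist_eq]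
  refine (abs_abs_sub_abs_le_abs_sub _ _).trans (abs_le.mpr ⟨?_, ?_⟩) <;>
    linarith [h.1, h.2, h'.1, h'.2]

lemma sub_mem_Icc_of_mem_shiftCorr {p : Xset × Yset} (hp : p ∈ shiftCorr) :
    (p.2 : ℝ) - p.1 ∈ Icc 0 1 := by
  rcases hp with hp | hp <;> rw [hp] <;> norm_num

lemma disMS_shiftCorr_le_one : disMS shiftCorr ≤ 1 :=
  iSup₂_le fun _ hp => iSup₂_le fun _ hq => ofReal_le_one.mpr <|
    abs_dist_sub_dist_le_one (sub_mem_Icc_of_mem_shiftCorr hp) (sub_mem_Icc_of_mem_shiftCorr hq)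

/-- `X` and `Y` have the same cardinality, the correspondence
`R = {(2^n, 2^n)} ∪ {(2^n, 2^n + 1)}` has distortion at most `1`
(so `2 d_GH(X,Y) ≤ 1 < ∞`), yet every bijection `X → Y` has infinite distortion. -/
theorem stmt_2 :
    Cardinal.mk Xset = Cardinal.mk Yset ∧
    (IsCorr {p : Xset × Yset | (p.2 : ℝ) = (p.1 : ℝ) ∨ (p.2 : ℝ) = (p.1 : ℝ) + 1} ∧
      disMS {p : Xset × Yset | (p.2 : ℝ) = (p.1 : ℝ) ∨ (p.2 : ℝ) = (p.1 : ℝ) + 1} ≤ 1 ∧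
      (⨅ R ∈ {R : Set (Xset × Yset) | IsCorr R}, disMS R) ≤ 1) ∧
    ∀ f : Xset ≃ Yset,
      (⨆ a : Xset, ⨆ a' : Xset, ENNReal.ofReal |dist (f a) (f a') - dist a a'|) = ⊤ := by
  exact ⟨mk_Xset.trans mk_Yset.symm,
    ⟨isCorr_shiftCorr, disMS_shiftCorr_le_one,
      (iInf₂_le _ isCorr_shiftCorr).trans disMS_shiftCorr_le_one⟩,
    distortion_eq_top⟩
end

section
/- Let M and X be metric spaces with M having at least 3 points and s(M) > 0, let ε be a real number with 0 < ε ≤ s(M)/2, and let R be a correspondence between M and X with dis R < 2ε. Then: (1) for any distinct i, j ∈ M the sets R(i) and R(j) are disjoint, so the family {R(i)}_{i∈M} is a partition of X; (2) for any distinct i, j ∈ M and any x ∈ R(i), x' ∈ R(j), one has |dist(x,x') − dist(i,j)| < 2ε; (3) for every i ∈ M and every x, x' ∈ R(i), dist(x,x') < 2ε (so diam R(i) ≤ 2ε). -/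
open ENNReal

/-- `s(M) = inf{dist(x,x') : x ≠ x'}`. -/
noncomputable def sSpace (M : Type*) [MetricSpace M] : ℝ :=
  sInf {r : ℝ | ∃ x y : M, x ≠ y ∧ r = dist x y}

/-- Basic properties of a correspondence `R` between a totally discrete space `M` and `X`
with `dis R < 2ε`: (1) the images `R(i)`, `i ∈ M`, are pairwise disjoint and cover `X`;
(2) distances between points of `R(i)` and `R(j)`, `i ≠ j`, differ from `dist i j`
by less than `2ε`; (3) each `R(i)` has diameter `< 2ε`. -/
theorem stmt_3 {M X : Type*} [MetricSpace M] [MetricSpace X]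
    (hM : ∃ x y z : M, x ≠ y ∧ x ≠ z ∧ y ≠ z) (hs : 0 < sSpace M)
    (ε : ℝ) (hε0 : 0 < ε) (hε : ε ≤ sSpace M / 2)
    (R : Set (M × X)) (hR : IsCorr R) (hdis : disMS R < ENNReal.ofReal (2 * ε)) :
    (∀ i j : M, i ≠ j → {x : X | (i, x) ∈ R} ∩ {x : X | (j, x) ∈ R} = ∅) ∧
    (∀ x : X, ∃ i : M, (i, x) ∈ R) ∧
    (∀ i j : M, i ≠ j → ∀ x x' : X, (i, x) ∈ R → (j, x') ∈ R →
      |dist x x' - dist i j| < 2 * ε) ∧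
    ∀ i : M, ∀ x x' : X, (i, x) ∈ R → (i, x') ∈ R → dist x x' < 2 * ε := by
  have key : ∀ p ∈ R, ∀ q ∈ R, |dist p.1 q.1 - dist p.2 q.2| < 2 * ε := by
    intro p hp q hq
    have h1 : ENNReal.ofReal |dist p.1 q.1 - dist p.2 q.2| ≤ disMS R := by
      refine le_trans ?_ (le_iSup₂ (f := fun p (_ : p ∈ R) => ⨆ q ∈ R,
        ENNReal.ofReal |dist p.1 q.1 - dist p.2 q.2|) p hp)
      exact le_iSup₂ (f := fun q (_ : q ∈ R) =>
        ENNReal.ofReal |dist p.1 q.1 - dist p.2 q.2|) q hq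
    have := lt_of_le_of_lt h1 hdis
    rwa [ENNReal.ofReal_lt_ofReal_iff (by linarith)] at this
  have hsle : ∀ i j : M, i ≠ j → sSpace M ≤ dist i j := by
    intro i j hij
    refine csInf_le ⟨0, ?_⟩ ⟨i, j, hij, rfl⟩
    rintro r ⟨x, y, -, rfl⟩
    exact dist_nonneg
  refine ⟨?_, hR.2, ?_, ?_⟩
  · intro i j hij
    ext x
    simp only [Set.mem_inter_iff, Set.mem_setOf_eq, Set.mem_empty_iff_false, iff_false]
    rintro ⟨hi, hj⟩
    have := key (i, x) hi (j, x) hj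
    simp only [dist_self] at this
    have h2 := hsle i j hij
    rw [abs_of_nonneg (by simpa using dist_nonneg)] at this
    simp at this
    linarith
  · intro i j hij x x' hx hx'
    have := key (i, x) hx (j, x') hx'
    rw [abs_sub_comm] at this
    exact this
  · intro i x x' hx hx'
    have := key (i, x) hx (i, x') hx'
    simp only [dist_self, zero_sub, abs_neg, abs_of_nonneg dist_nonneg] at this
    exact this
end

section
/- Let M and X be metric spaces with M having at least 3 points and s(M) > 0, and let ε be a real number with 0 < ε ≤ s(M)/4. If R and R' are correspondences between M and X with dis R < 2ε and dis R' < 2ε, then the induced partitions of X coincide: {R(i) : i ∈ M} = {R'(j) : j ∈ M} as families of subsets of X. In other words, the canonical partition of X with respect to M is uniquely defined. -/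
open ENNReal

lemma dis_lt_aux {A B : Type*} [MetricSpace A] [MetricSpace B] {σ : Set (A × B)} {c : ℝ}
    (h : disMS σ < ENNReal.ofReal c) {a a' : A} {b b' : B}
    (h1 : (a, b) ∈ σ) (h2 : (a', b') ∈ σ) : |dist a a' - dist b b'| < c := by
  have h3 : ENNReal.ofReal |dist a a' - dist b b'| ≤ disMS σ := by
    refine le_trans ?_ (le_iSup₂ (f := fun p (_ : p ∈ σ) => ⨆ q ∈ σ,
      ENNReal.ofReal |dist p.1 q.1 - dist p.2 q.2|) (a, b) h1)
    exact le_iSup₂ (f := fun q (_ : q ∈ σ) =>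
      ENNReal.ofReal |dist a q.1 - dist b q.2|) (a', b') h2
  exact (ENNReal.ofReal_lt_ofReal_iff_of_nonneg (abs_nonneg _)).mp (lt_of_le_of_lt h3 h)

lemma sSpace_le_dist {M : Type*} [MetricSpace M] {x y : M} (h : x ≠ y) :
    sSpace M ≤ dist x y :=
  csInf_le ⟨0, fun r ⟨_, _, _, hr⟩ => hr ▸ dist_nonneg⟩ ⟨x, y, h, rfl⟩

lemma key_aux {M X : Type*} [MetricSpace M] [MetricSpace X]
    (ε : ℝ) (hε0 : 0 < ε) (hε : ε ≤ sSpace M / 4)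
    (R R' : Set (M × X)) (hR : IsCorr R) (hR' : IsCorr R')
    (hdis : disMS R < ENNReal.ofReal (2 * ε)) (hdis' : disMS R' < ENNReal.ofReal (2 * ε))
    (i : M) : ∃ j : M, {x : X | (i, x) ∈ R} = {x : X | (j, x) ∈ R'} := by
  obtain ⟨x, hx⟩ := hR.1 i
  obtain ⟨j, hjx⟩ := hR'.2 x
  refine ⟨j, Set.ext fun y => ⟨fun hy => ?_, fun hy => ?_⟩⟩
  · obtain ⟨j', hj'⟩ := hR'.2 y
    have d1 : |dist i i - dist x y| < 2 * ε := dis_lt_aux hdis hx hy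
    have d2 : |dist j j' - dist x y| < 2 * ε := dis_lt_aux hdis' hjx hj'
    rw [dist_self] at d1
    have hxy : dist x y < 2 * ε := by
      have := abs_lt.mp d1; linarith [this.1]
    have hd : dist j j' < 4 * ε := by
      have := abs_lt.mp d2; linarith [this.1, this.2]
    have hjj : j = j' := by
      by_contra hne
      have := sSpace_le_dist hne
      linarith
    rw [hjj]; exact hj'
  · obtain ⟨i', hi'⟩ := hR.2 y
    have d1 : |dist j j - dist x y| < 2 * ε := dis_lt_aux hdis' hjx hy
    have d2 : |dist i i' - dist x y| < 2 * ε := dis_lt_aux hdis hx hi'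
    rw [dist_self] at d1
    have hxy : dist x y < 2 * ε := by
      have := abs_lt.mp d1; linarith [this.1]
    have hd : dist i i' < 4 * ε := by
      have := abs_lt.mp d2; linarith [this.1, this.2]
    have hii : i = i' := by
      by_contra hne
      have := sSpace_le_dist hne
      linarith
    rw [hii]; exact hi'

/-- Uniqueness of the canonical partition: if `0 < ε ≤ s(M)/4` and `R`, `R'` are
correspondences between `M` and `X` with distortion `< 2ε`, then the partitions
`{R(i)}` and `{R'(j)}` of `X` coincide. -/
theorem stmt_4 {M X : Type*} [MetricSpace M] [MetricSpace X]
    (hM : ∃ x y z : M, x ≠ y ∧ x ≠ z ∧ y ≠ z) (hs : 0 < sSpace M)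
    (ε : ℝ) (hε0 : 0 < ε) (hε : ε ≤ sSpace M / 4)
    (R R' : Set (M × X)) (hR : IsCorr R) (hR' : IsCorr R')
    (hdis : disMS R < ENNReal.ofReal (2 * ε)) (hdis' : disMS R' < ENNReal.ofReal (2 * ε)) :
    {S : Set X | ∃ i : M, S = {x : X | (i, x) ∈ R}} =
      {S : Set X | ∃ j : M, S = {x : X | (j, x) ∈ R'}} := by
  ext S
  constructor
  · rintro ⟨i, rfl⟩
    obtain ⟨j, hj⟩ := key_aux ε hε0 hε R R' hR hR' hdis hdis' i
    exact ⟨j, hj⟩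
  · rintro ⟨j, rfl⟩
    obtain ⟨i, hi⟩ := key_aux ε hε0 hε R' R hR' hR hdis' hdis j
    exact ⟨i, hi⟩
end

section
/- Let I be a set with at least 3 elements, let d_M be a metric on I making M = (I, d_M) a metric space with s(M) > 0 and e(M) > 0, and let ε be a real number with 0 < ε ≤ s(M)/8 and ε < e(M)/8. Let a and b be metrics on I with sup_{i,j ∈ I} |a(i,j) − d_M(i,j)| < 2ε and sup_{i,j ∈ I} |b(i,j) − d_M(i,j)| < 2ε. Then inf{dis R : R a correspondence between (I,a) and (I,b)} = sup_{i,j ∈ I} |a(i,j) − b(i,j)|; that is, 2·d_GH((I,a),(I,b)) equals the sup-distance between the distance matrices a and b, so the canonical projection from the metric cone to the Gromov–Hausdorff class is isometric on the ε-ball (in the half-sup metric) around d_M. -/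
/-!
The diagonal correspondence shows that the infimum is at most `sup |a - b| < 4ε`. Conversely,
both `a` and `b` are `6ε`-separated while a correspondence of distortion `< 4ε` cannot relate a
point to two distinct points, so such a correspondence contains the graph of a bijection `F`.
That bijection has distortion `< 8ε < e(M)` with respect to `dM`, hence `F = id`, the
correspondence contains the diagonal, and its distortion is at least `sup |a - b|`.
-/

open ENNReal

/-- A metric on a set `I`: symmetric, vanishing exactly on the diagonal, triangle inequality. -/
def IsMetric {I : Type*} (d : I → I → ℝ) : Prop :=
  (∀ x y, d x y = d y x) ∧ (∀ x y, d x y = 0 ↔ x = y) ∧ ∀ x y z, d x z ≤ d x y + d y z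

/-- Distortion of a relation with respect to distance functions `dA` and `dB`. -/
noncomputable def disRel {A B : Type*} (dA : A → A → ℝ) (dB : B → B → ℝ)
    (σ : Set (A × B)) : ℝ≥0∞ :=
  ⨆ p ∈ σ, ⨆ q ∈ σ, ENNReal.ofReal |dA p.1 q.1 - dB p.2 q.2|

/-- `s(d) = inf{d(i,j) : i ≠ j}`. -/
noncomputable def sVal {I : Type*} (d : I → I → ℝ) : ℝ :=
  sInf {r : ℝ | ∃ i j : I, i ≠ j ∧ r = d i j}

/-- `e(d) = inf{dis f : f : I ≃ I, f ≠ id}`, a value in `[0,∞]`. -/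
noncomputable def eVal {I : Type*} (d : I → I → ℝ) : ℝ≥0∞ :=
  ⨅ f ∈ {f : I ≃ I | f ≠ Equiv.refl I},
    ⨆ i : I, ⨆ j : I, ENNReal.ofReal |d (f i) (f j) - d i j|

lemma IsMetric.apply_self {I : Type*} {d : I → I → ℝ} (hd : IsMetric d) (x : I) : d x x = 0 :=
  (hd.2.1 x x).2 rfl

lemma IsMetric.nonneg {I : Type*} {d : I → I → ℝ} (hd : IsMetric d) (x y : I) : 0 ≤ d x y := by
  have := hd.2.2 x y x
  rw [hd.apply_self, hd.1 y x] at this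
  linarith

lemma IsMetric.sVal_le {I : Type*} {d : I → I → ℝ} (hd : IsMetric d) {x y : I} (hxy : x ≠ y) :
    sVal d ≤ d x y :=
  csInf_le ⟨0, by rintro r ⟨x, y, -, rfl⟩; exact hd.nonneg x y⟩ ⟨x, y, hxy, rfl⟩

lemma lt_of_iSup₂_ofReal_lt {ι κ : Type*} {f : ι → κ → ℝ} {c : ℝ}
    (h : ⨆ i, ⨆ j, ENNReal.ofReal (f i j) < ENNReal.ofReal c) (i : ι) (j : κ) : f i j < c :=
  (ENNReal.ofReal_lt_ofReal_iff'.1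
    ((le_iSup₂ (f := fun i j => ENNReal.ofReal (f i j)) i j).trans_lt h)).1

lemma eq_refl_of_lt_eVal {I : Type*} {d : I → I → ℝ} {F : I ≃ I}
    (h : ⨆ i, ⨆ j, ENNReal.ofReal |d (F i) (F j) - d i j| < eVal d) : F = Equiv.refl I := by
  by_contra hF
  exact (iInf₂_le (f := fun f (_ : f ∈ {f : I ≃ I | f ≠ Equiv.refl I}) =>
    ⨆ i, ⨆ j, ENNReal.ofReal |d (f i) (f j) - d i j|) F hF).not_gt h

section disRel

variable {A B : Type*} (dA : A → A → ℝ) (dB : B → B → ℝ)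

lemma le_disRel {σ : Set (A × B)} {p q : A × B} (hp : p ∈ σ) (hq : q ∈ σ) :
    ENNReal.ofReal |dA p.1 q.1 - dB p.2 q.2| ≤ disRel dA dB σ :=
  le_iSup₂_of_le (f := fun p (_ : p ∈ σ) => ⨆ q ∈ σ, ENNReal.ofReal |dA p.1 q.1 - dB p.2 q.2|)
    p hp (le_iSup₂ (f := fun q (_ : q ∈ σ) => ENNReal.ofReal |dA p.1 q.1 - dB p.2 q.2|) q hq)

lemma disRel_mono {σ τ : Set (A × B)} (h : σ ⊆ τ) : disRel dA dB σ ≤ disRel dA dB τ :=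
  iSup₂_le fun _ hp => iSup₂_le fun _ hq => le_disRel dA dB (h hp) (h hq)

lemma disRel_diagonal (a b : A → A → ℝ) :
    disRel a b (Set.diagonal A) = ⨆ i, ⨆ j, ENNReal.ofReal |a i j - b i j| := by
  simp only [disRel, ← Set.range_diag, iSup_range, Function.diag]

lemma forall_abs_sub_lt_of_disRel_lt {σ : Set (A × B)} {δ : ℝ}
    (h : disRel dA dB σ < ENNReal.ofReal δ) :
    ∀ p ∈ σ, ∀ q ∈ σ, |dA p.1 q.1 - dB p.2 q.2| < δ :=
  fun _ hp _ hq => (ENNReal.ofReal_lt_ofReal_iff'.1 ((le_disRel dA dB hp hq).trans_lt h)).1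

end disRel

lemma IsCorr.exists_equiv_of_abs_sub_lt {A B : Type*} {a : A → A → ℝ} {b : B → B → ℝ}
    {R : Set (A × B)} {δ : ℝ} (hR : IsCorr R) (ha : ∀ x, a x x = 0) (hb : ∀ y, b y y = 0)
    (haδ : ∀ x x', x ≠ x' → δ ≤ a x x') (hbδ : ∀ y y', y ≠ y' → δ ≤ b y y')
    (hdis : ∀ p ∈ R, ∀ q ∈ R, |a p.1 q.1 - b p.2 q.2| < δ) :
    ∃ F : A ≃ B, ∀ x, (x, F x) ∈ R := by
  have right_unique : ∀ {x y y'}, (x, y) ∈ R → (x, y') ∈ R → y = y' := by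
    intro x y y' h h'
    by_contra hne
    have := hdis _ h _ h'
    rw [ha, zero_sub, abs_neg] at this
    linarith [le_abs_self (b y y'), hbδ y y' hne]
  have left_unique : ∀ {x x' y}, (x, y) ∈ R → (x', y) ∈ R → x = x' := by
    intro x x' y h h'
    by_contra hne
    have := hdis _ h _ h'
    rw [hb, sub_zero] at this
    linarith [le_abs_self (a x x'), haδ x x' hne]
  choose f hf using hR.1
  choose g hg using hR.2
  exact ⟨⟨f, g, fun x => left_unique (hg _) (hf x), fun y => right_unique (hf _) (hg y)⟩, hf⟩

theorem stmt_8_general {I : Type*}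
    (dM : I → I → ℝ) (hM : IsMetric dM)
    (ε : ℝ) (hε0 : 0 < ε) (hε1 : ε ≤ sVal dM / 8) (hε2 : ENNReal.ofReal ε < eVal dM / 8)
    (a b : I → I → ℝ) (ha : IsMetric a) (hb : IsMetric b)
    (hadM : (⨆ i, ⨆ j, ENNReal.ofReal |a i j - dM i j|) < ENNReal.ofReal (2 * ε))
    (hbdM : (⨆ i, ⨆ j, ENNReal.ofReal |b i j - dM i j|) < ENNReal.ofReal (2 * ε)) :
    (⨅ R ∈ {R : Set (I × I) | IsCorr R}, disRel a b R) =
      ⨆ i, ⨆ j, ENNReal.ofReal |a i j - b i j| := by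
  have haM := lt_of_iSup₂_ofReal_lt hadM
  have hbM := lt_of_iSup₂_ofReal_lt hbdM
  have hsep : ∀ i j, i ≠ j → 8 * ε ≤ dM i j := fun i j hij => by linarith [hM.sVal_le hij]
  rw [← disRel_diagonal]
  refine le_antisymm (iInf₂_le _ ⟨fun i => ⟨i, rfl⟩, fun j => ⟨j, rfl⟩⟩) (le_iInf₂ fun R hR => ?_)
  by_contra! hlt
  have hdiag_le : disRel a b (Set.diagonal I) ≤ ENNReal.ofReal (4 * ε) := by
    rw [disRel_diagonal]
    refine iSup₂_le fun i j => ENNReal.ofReal_le_ofReal ?_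
    linarith [abs_sub_le (a i j) (dM i j) (b i j), abs_sub_comm (dM i j) (b i j), haM i j, hbM i j]
  have hdis := forall_abs_sub_lt_of_disRel_lt a b (hlt.trans_le hdiag_le)
  obtain ⟨F, hF⟩ := hR.exists_equiv_of_abs_sub_lt ha.apply_self hb.apply_self
    (fun i j hij => by linarith [hsep i j hij, (abs_lt.1 (haM i j)).1])
    (fun i j hij => by linarith [hsep i j hij, (abs_lt.1 (hbM i j)).1]) hdis
  have hF_refl : F = Equiv.refl I := by
    refine eq_refl_of_lt_eVal (d := dM) (lt_of_le_of_lt (b := ENNReal.ofReal (8 * ε)) ?_ ?_)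
    · refine iSup₂_le fun i j => ENNReal.ofReal_le_ofReal ?_
      have h1 := abs_lt.1 (hbM (F i) (F j))
      have h2 := abs_lt.1 (hdis _ (hF i) _ (hF j))
      have h3 := abs_lt.1 (haM i j)
      exact abs_le.2 ⟨by linarith, by linarith⟩
    · rw [ENNReal.ofReal_mul (by norm_num), ENNReal.ofReal_ofNat, mul_comm]
      exact (ENNReal.lt_div_iff_mul_lt (by simp) (by simp)).1 hε2
  have hdiag : Set.diagonal I ⊆ R := by
    rintro ⟨i, j⟩ (rfl : i = j)
    simpa [hF_refl] using hF i
  exact (disRel_mono a b hdiag).not_gt hlt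

/-- Local isometry of the canonical projection: if `dM` is a totally discrete, totally
asymmetric metric on `I` (`#I ≥ 3`), `0 < ε ≤ s(M)/8`, `ε < e(M)/8`, and `a`, `b` are metrics
on `I` with `sup_{i,j} |a i j - dM i j| < 2ε` and `sup_{i,j} |b i j - dM i j| < 2ε`, then
`2 d_GH((I,a),(I,b)) = inf{dis R : R correspondence} = sup_{i,j} |a i j - b i j|`. -/
theorem stmt_8 {I : Type*} (hI : ∃ i j k : I, i ≠ j ∧ i ≠ k ∧ j ≠ k)
    (dM : I → I → ℝ) (hM : IsMetric dM) (hs : 0 < sVal dM) (he : 0 < eVal dM)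
    (ε : ℝ) (hε0 : 0 < ε) (hε1 : ε ≤ sVal dM / 8) (hε2 : ENNReal.ofReal ε < eVal dM / 8)
    (a b : I → I → ℝ) (ha : IsMetric a) (hb : IsMetric b)
    (hadM : (⨆ i, ⨆ j, ENNReal.ofReal |a i j - dM i j|) < ENNReal.ofReal (2 * ε))
    (hbdM : (⨆ i, ⨆ j, ENNReal.ofReal |b i j - dM i j|) < ENNReal.ofReal (2 * ε)) :
    (⨅ R ∈ {R : Set (I × I) | IsCorr R}, disRel a b R) =
      ⨆ i, ⨆ j, ENNReal.ofReal |a i j - b i j| :=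
  stmt_8_general dM hM ε hε0 hε1 hε2 a b ha hb hadM hbdM
end

section
/- For every infinite set X and every real number ε with 0 < ε < 1, there exists a metric space V whose cardinality equals that of X, all of whose nonzero distances lie in {1, 1+ε}, and which is generic: s(V) = 1 > 0, t(V) ≥ 1 − ε > 0, and every bijection f : V → V with f ≠ id has dis f ≥ ε, so e(V) ≥ ε > 0. In particular, generic metric spaces exist in every infinite cardinality. -/
open ENNReal

universe u

/-- `t(d) = inf{d(i,j) + d(j,k) - d(i,k) : i, j, k pairwise distinct}`. -/
noncomputable def tVal {I : Type*} (d : I → I → ℝ) : ℝ :=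
  sInf {r : ℝ | ∃ i j k : I, i ≠ j ∧ j ≠ k ∧ i ≠ k ∧ r = d i j + d j k - d i k}

section AuxGen

open Function

variable {I : Type*} [LinearOrder I]

/-- The two-valued distance on `I ⊕ I`. -/
noncomputable def ddist (ε : ℝ) : I ⊕ I → I ⊕ I → ℝ
  | .inl a, .inl b => if a = b then 0 else 1
  | .inr a, .inr b => if a = b then 0 else 1 + ε
  | .inl a, .inr b => if a ≤ b then 1 else 1 + ε
  | .inr b, .inl a => if a ≤ b then 1 else 1 + ε

variable {ε : ℝ}

lemma ddist_comm (x y : I ⊕ I) : ddist ε x y = ddist ε y x := by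
  rcases x with a | a <;> rcases y with b | b <;> simp only [ddist]
  · rcases eq_or_ne a b with h | h
    · simp [h]
    · simp [h, h.symm]
  · rcases eq_or_ne a b with h | h
    · simp [h]
    · simp [h, h.symm]

lemma ddist_eq_zero_iff (hε0 : 0 < ε) {x y : I ⊕ I} :
    ddist ε x y = 0 ↔ x = y := by
  rcases x with a | a <;> rcases y with b | b <;> simp only [ddist] <;> split_ifs with h <;>
    simp_all <;> intro hc <;> linarith

lemma ddist_vals (hε0 : 0 < ε) {x y : I ⊕ I} (h : x ≠ y) :
    ddist ε x y = 1 ∨ ddist ε x y = 1 + ε := by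
  rcases x with a | a <;> rcases y with b | b <;> simp only [ddist] <;> split_ifs with hh <;>
    simp_all

lemma one_le_ddist (hε0 : 0 < ε) {x y : I ⊕ I} (h : x ≠ y) : 1 ≤ ddist ε x y := by
  rcases ddist_vals hε0 h with h' | h' <;> rw [h'] <;> linarith

lemma ddist_le (hε0 : 0 < ε) (x y : I ⊕ I) : ddist ε x y ≤ 1 + ε := by
  rcases eq_or_ne x y with rfl | h
  · rw [(ddist_eq_zero_iff hε0 (y := x)).2 rfl]
    linarith

  · rcases ddist_vals hε0 h with h' | h' <;> rw [h'] <;> linarith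

lemma ddist_triangle (hε0 : 0 < ε) (hε1 : ε < 1) (x y z : I ⊕ I) :
    ddist ε x z ≤ ddist ε x y + ddist ε y z := by
  rcases eq_or_ne x y with rfl | hxy
  · rw [(ddist_eq_zero_iff hε0 (y := x)).2 rfl, zero_add]
  rcases eq_or_ne y z with rfl | hyz
  · rw [(ddist_eq_zero_iff hε0 (y := y)).2 rfl, add_zero]
  have h1 := one_le_ddist hε0 hxy
  have h2 := one_le_ddist hε0 hyz
  have h3 := ddist_le hε0 x z
  linarith

lemma ite_eq_ite_iff (hε0 : 0 < ε) {p q : Prop} [Decidable p] [Decidable q]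
    (h : (if p then (1 : ℝ) else 1 + ε) = if q then 1 else 1 + ε) : p ↔ q := by
  split_ifs at h <;> first | tauto | linarith

/-- The non-neighbors of `x` (pairs at distance `1+ε`) are pairwise at distance `1+ε`. -/
def IndepNbrs (ε : ℝ) (x : I ⊕ I) : Prop :=
  ∀ y z, ddist ε x y = 1 + ε → ddist ε x z = 1 + ε → y ≠ z → ddist ε y z = 1 + ε

lemma indep_inl (hε0 : 0 < ε) (a : I) : IndepNbrs ε (Sum.inl a : I ⊕ I) := by
  intro y z hy hz hyz
  rcases y with b | b
  · exfalso; revert hy; simp only [ddist]; split_ifs <;> intro h <;> linarith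
  rcases z with c | c
  · exfalso; revert hz; simp only [ddist]; split_ifs <;> intro h <;> linarith
  have hbc : b ≠ c := fun h => hyz (by rw [h])
  simp [ddist, hbc]

lemma not_indep_inr [NoMaxOrder I] (hε0 : 0 < ε) (b : I) :
    ¬ IndepNbrs ε (Sum.inr b : I ⊕ I) := by
  intro h
  obtain ⟨a, ha⟩ := exists_gt b
  obtain ⟨a', ha'⟩ := exists_gt a
  have h1 : ddist ε (Sum.inr b : I ⊕ I) (Sum.inl a) = 1 + ε := by
    simp [ddist, not_le.2 ha]
  have h2 : ddist ε (Sum.inr b : I ⊕ I) (Sum.inl a') = 1 + ε := by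
    simp [ddist, not_le.2 (ha.trans ha')]
  have h3 := h _ _ h1 h2 (by simp [ha'.ne])
  simp [ddist, ha'.ne] at h3
  linarith

lemma indep_transfer (f : (I ⊕ I) ≃ (I ⊕ I))
    (H : ∀ x y, ddist ε (f x) (f y) = ddist ε x y) (x : I ⊕ I)
    (hx : IndepNbrs ε x) : IndepNbrs ε (f x) := by
  intro y z hy hz hyz
  obtain ⟨y', rfl⟩ := f.surjective y
  obtain ⟨z', rfl⟩ := f.surjective z
  rw [H] at hy hz ⊢
  exact hx y' z' hy hz fun h => hyz (congrArg f h)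

lemma tau_eq_id [WellFoundedLT I] {τ : I → I} (hsm : StrictMono τ)
    (hsurj : Function.Surjective τ) (b : I) : τ b = b := by
  let e := StrictMono.orderIsoOfSurjective τ hsm hsurj
  refine le_antisymm ?_ hsm.le_apply
  have h2 : b ≤ e.symm b := e.symm.strictMono.le_apply
  have h3 := e.monotone h2
  rw [e.apply_symm_apply] at h3
  exact h3

lemma rigid [WellFoundedLT I] [NoMaxOrder I] (hε0 : 0 < ε)
    (f : (I ⊕ I) ≃ (I ⊕ I)) (H : ∀ x y, ddist ε (f x) (f y) = ddist ε x y) :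
    f = Equiv.refl (I ⊕ I) := by
  have H' : ∀ x y, ddist ε (f.symm x) (f.symm y) = ddist ε x y := by
    intro x y
    conv_rhs => rw [← f.apply_symm_apply x, ← f.apply_symm_apply y]
    rw [H]
  have A := indep_transfer f H
  have A' := indep_transfer f.symm H'
  -- `f` and `f.symm` map left points to left points
  have hPl : ∀ a : I, ∃ a', f (Sum.inl a) = Sum.inl a' := by
    intro a
    rcases h : f (Sum.inl a) with b | b
    · exact ⟨b, rfl⟩
    · have := A _ (indep_inl hε0 a)
      rw [h] at this
      exact absurd this (not_indep_inr hε0 b)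
  have hPl' : ∀ a : I, ∃ a', f.symm (Sum.inl a) = Sum.inl a' := by
    intro a
    rcases h : f.symm (Sum.inl a) with b | b
    · exact ⟨b, rfl⟩
    · have := A' _ (indep_inl hε0 a)
      rw [h] at this
      exact absurd this (not_indep_inr hε0 b)
  -- `f` and `f.symm` map right points to right points
  have hQr : ∀ b : I, ∃ b', f (Sum.inr b) = Sum.inr b' := by
    intro b
    rcases h : f (Sum.inr b) with c | c
    · obtain ⟨a', ha'⟩ := hPl' c
      rw [← h, f.symm_apply_apply] at ha'
      exact absurd ha' (by simp)
    · exact ⟨c, rfl⟩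
  have hQr' : ∀ b : I, ∃ b', f.symm (Sum.inr b) = Sum.inr b' := by
    intro b
    rcases h : f.symm (Sum.inr b) with c | c
    · obtain ⟨a', ha'⟩ := hPl c
      rw [← h, f.apply_symm_apply] at ha'
      exact absurd ha' (by simp)
    · exact ⟨c, rfl⟩
  choose σ hσ using hPl
  choose τ hτ using hQr
  have key : ∀ a b : I, σ a ≤ τ b ↔ a ≤ b := by
    intro a b
    have h := H (Sum.inl a) (Sum.inr b)
    rw [hσ, hτ] at h
    simp only [ddist] at h
    exact ite_eq_ite_iff hε0 h
  have σsurj : Function.Surjective σ := by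
    intro c
    obtain ⟨a, ha⟩ := hPl' c
    refine ⟨a, ?_⟩
    have : f (Sum.inl a) = Sum.inl c := by rw [← ha, f.apply_symm_apply]
    rw [hσ] at this
    exact Sum.inl.inj this
  have τsurj : Function.Surjective τ := by
    intro c
    obtain ⟨b, hb⟩ := hQr' c
    refine ⟨b, ?_⟩
    have : f (Sum.inr b) = Sum.inr c := by rw [← hb, f.apply_symm_apply]
    rw [hτ] at this
    exact Sum.inr.inj this
  have τinj : Function.Injective τ := by
    intro b b' h
    have : f (Sum.inr b) = f (Sum.inr b') := by rw [hτ, hτ, h]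
    exact Sum.inr.inj (f.injective this)
  have τmono : Monotone τ := by
    intro b b' hbb'
    obtain ⟨a, ha⟩ := σsurj (τ b)
    have h1 : a ≤ b := (key a b).1 (le_of_eq ha)
    have h2 : σ a ≤ τ b' := (key a b').2 (h1.trans hbb')
    rwa [ha] at h2
  have τid : ∀ b, τ b = b := tau_eq_id (τmono.strictMono_of_injective τinj) τsurj
  have σid : ∀ a, σ a = a := by
    intro a
    refine le_antisymm ?_ ?_
    · have := (key a a).2 le_rfl
      rwa [τid] at this
    · have := (key a (σ a)).1 (by rw [τid])
      exact this
  ext x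
  rcases x with a | b
  · rw [Equiv.refl_apply, hσ, σid]
  · rw [Equiv.refl_apply, hτ, τid]

end AuxGen

/-- For every infinite set `X` and every `0 < ε < 1` there exists a generic metric space `V`
of the same cardinality as `X`, all of whose nonzero distances lie in `{1, 1 + ε}`, with
`s(V) = 1`, `t(V) ≥ 1 - ε`, and every non-identical self-bijection of distortion `≥ ε`
(so `e(V) ≥ ε`). -/
theorem stmt_12 (X : Type u) [Infinite X] (ε : ℝ) (hε0 : 0 < ε) (hε1 : ε < 1) :
    ∃ (V : Type u) (d : V → V → ℝ),
      IsMetric d ∧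
      Cardinal.mk V = Cardinal.mk X ∧
      (∀ x y : V, x ≠ y → d x y = 1 ∨ d x y = 1 + ε) ∧
      sVal d = 1 ∧
      1 - ε ≤ tVal d ∧
      (∀ f : V ≃ V, f ≠ Equiv.refl V →
        ENNReal.ofReal ε ≤ ⨆ x : V, ⨆ y : V, ENNReal.ofReal |d (f x) (f y) - d x y|) ∧
      ENNReal.ofReal ε ≤ eVal d := by
  classical
  set κ : Cardinal.{u} := Cardinal.mk X with hκ
  have hκinf : Cardinal.aleph0 ≤ κ := Cardinal.infinite_iff.mp ‹Infinite X›
  set I : Type u := κ.ord.ToType with hI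
  haveI : NoMaxOrder I := Cardinal.noMaxOrder hκinf
  have hmkI : Cardinal.mk I = κ := by
    rw [hI, Cardinal.mk_toType, Cardinal.card_ord]
  haveI : Infinite I := by
    rw [Cardinal.infinite_iff, hmkI]; exact hκinf
  obtain ⟨a₀, b₀, hab⟩ := exists_pair_ne I
  have hdis : ∀ f : (I ⊕ I) ≃ (I ⊕ I), f ≠ Equiv.refl (I ⊕ I) →
      ENNReal.ofReal ε ≤ ⨆ x : I ⊕ I, ⨆ y : I ⊕ I,
        ENNReal.ofReal |ddist ε (f x) (f y) - ddist ε x y| := by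
    intro f hf
    have hex : ∃ x y : I ⊕ I, ddist ε (f x) (f y) ≠ ddist ε x y := by
      by_contra hc
      push_neg at hc
      exact hf (rigid hε0 f hc)
    obtain ⟨x, y, hxy⟩ := hex
    have hxney : x ≠ y := by
      rintro rfl
      exact hxy (by rw [(ddist_eq_zero_iff hε0).2 rfl, (ddist_eq_zero_iff hε0).2 rfl])
    have hfxney : f x ≠ f y := fun h => hxney (f.injective h)
    have habs : |ddist ε (f x) (f y) - ddist ε x y| = ε := by
      rcases ddist_vals hε0 hfxney with h1 | h1 <;> rcases ddist_vals hε0 hxney with h2 | h2 <;>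
        rw [h1, h2] at hxy ⊢
      · exact absurd rfl hxy
      · rw [show (1 : ℝ) - (1 + ε) = -ε by ring, abs_neg, abs_of_pos hε0]
      · rw [show (1 : ℝ) + ε - 1 = ε by ring, abs_of_pos hε0]
      · exact absurd rfl hxy
    calc ENNReal.ofReal ε = ENNReal.ofReal |ddist ε (f x) (f y) - ddist ε x y| := by rw [habs]
      _ ≤ ⨆ x : I ⊕ I, ⨆ y : I ⊕ I, ENNReal.ofReal |ddist ε (f x) (f y) - ddist ε x y| :=
        le_iSup_of_le x (le_iSup_of_le y le_rfl)
  refine ⟨I ⊕ I, ddist ε, ⟨ddist_comm, fun x y => ddist_eq_zero_iff hε0,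
    fun x y z => ddist_triangle hε0 hε1 x y z⟩, ?_, fun x y h => ddist_vals hε0 h, ?_, ?_,
    hdis, le_iInf₂ fun f hf => hdis f hf⟩
  · rw [Cardinal.mk_sum, hmkI, Cardinal.lift_id, Cardinal.add_eq_self hκinf, hκ]
  · -- sVal = 1
    have hmem : (1 : ℝ) ∈ {r : ℝ | ∃ i j : I ⊕ I, i ≠ j ∧ r = ddist ε i j} := by
      refine ⟨Sum.inl a₀, Sum.inl b₀, by simp [hab], ?_⟩
      simp [ddist, hab]
    have hlb : ∀ r ∈ {r : ℝ | ∃ i j : I ⊕ I, i ≠ j ∧ r = ddist ε i j}, (1 : ℝ) ≤ r := by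
      rintro r ⟨i, j, hij, rfl⟩
      exact one_le_ddist hε0 hij
    exact le_antisymm (csInf_le ⟨1, hlb⟩ hmem) (le_csInf ⟨1, hmem⟩ hlb)
  · -- tVal ≥ 1 - ε
    refine le_csInf ⟨ddist ε (Sum.inl a₀ : I ⊕ I) (Sum.inr a₀) +
      ddist ε (Sum.inr a₀ : I ⊕ I) (Sum.inl b₀) - ddist ε (Sum.inl a₀ : I ⊕ I) (Sum.inl b₀),
      Sum.inl a₀, Sum.inr a₀, Sum.inl b₀, by simp, by simp, by simp [hab], rfl⟩ ?_
    rintro r ⟨i, j, k, hij, hjk, hik, rfl⟩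
    have h1 := one_le_ddist hε0 hij
    have h2 := one_le_ddist hε0 hjk
    have h3 := ddist_le hε0 i k
    linarith
end

section
/- For every infinite set X there exists a simple graph H whose vertex set has the same cardinality as X and whose automorphism group is trivial, i.e., the only bijection of the vertex set of H onto itself that preserves adjacency in both directions is the identity. -/
/-!
Well-order a set `W` of cardinality `#X` without a largest element and take two copies of it:
the vertices `inr b` form a clique, the vertices `inl a` are independent, and `inl a` is joined
to `inr b` exactly when `b ≤ a`. The `inl` vertices are the ones whose neighbourhood is a
clique, so every automorphism preserves the two copies and acts on them by permutations `g`, `h`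
of `W` with `h b ≤ g a ↔ b ≤ a`. This forces `g` to be an order automorphism of the well-order
`W`, hence the identity, and then `h` is the identity too.
-/

open Cardinal SimpleGraph

theorem Equiv.exists_sumCongr_eq {α β α' β' : Type*} (e : α ⊕ β ≃ α' ⊕ β')
    (he : ∀ x, (e x).isLeft = x.isLeft) :
    ∃ (e₁ : α ≃ α') (e₂ : β ≃ β'), Equiv.sumCongr e₁ e₂ = e := by
  have he' (x : α ⊕ β) : (e x).isRight = x.isRight := by
    rw [← Sum.bnot_isLeft, he, Sum.bnot_isLeft]
  refine ⟨(sumIsLeft.symm.trans (e.subtypeEquiv fun x => by rw [he])).trans sumIsLeft,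
    (sumIsRight.symm.trans (e.subtypeEquiv fun x => by rw [he'])).trans sumIsRight, ?_⟩
  ext (a | b) <;> simp [sumIsLeft, sumIsRight]

theorem SimpleGraph.Iso.isClique_image_iff {V V' : Type*} {G : SimpleGraph V}
    {G' : SimpleGraph V'} (φ : G ≃g G') {s : Set V} :
    G'.IsClique (φ '' s) ↔ G.IsClique s := by
  have hadj : Function.onFun G'.Adj φ = G.Adj := by ext; exact φ.map_adj_iff
  rw [IsClique, IsClique, φ.injective.injOn.pairwise_image, hadj]

theorem SimpleGraph.Iso.isClique_neighborSet_iff {V V' : Type*} {G : SimpleGraph V}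
    {G' : SimpleGraph V'} (φ : G ≃g G') (v : V) :
    G'.IsClique (G'.neighborSet (φ v)) ↔ G.IsClique (G.neighborSet v) := by
  rw [← φ.image_neighborSet, φ.isClique_image_iff]

theorem Equiv.eq_refl_of_apply_le_apply_iff {W : Type*} [LinearOrder W] [WellFoundedLT W]
    (g h : W ≃ W) (hgh : ∀ a b, h b ≤ g a ↔ b ≤ a) : g = Equiv.refl W ∧ h = Equiv.refl W := by
  have hg_mono : Monotone g := fun a a' haa' => by
    have hb : h.symm (g a) ≤ a := (hgh a _).1 (by rw [h.apply_symm_apply])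
    simpa using (hgh a' _).2 (hb.trans haa')
  have hg : g = Equiv.refl W := by
    ext a
    exact DFunLike.congr_fun (Subsingleton.elim
      ((hg_mono.strictMono_of_injective g.injective).orderIsoOfSurjective g g.surjective)
      (OrderIso.refl W)) a
  subst hg
  exact ⟨rfl, Equiv.ext fun b => eq_of_forall_ge_iff fun a => hgh a b⟩

section RigidGraph

variable (W : Type*) [LinearOrder W]

def rigidGraph : SimpleGraph (W ⊕ W) where
  Adj
    | .inl _, .inl _ => False
    | .inl a, .inr b => b ≤ a
    | .inr a, .inl b => a ≤ b
    | .inr a, .inr b => a ≠ b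
  symm := ⟨by rintro (a | a) (b | b) h <;> first | exact h | exact Ne.symm h⟩
  loopless := ⟨by rintro (a | a) h <;> first | exact h | exact h rfl⟩

variable {W}

@[simp] theorem rigidGraph_adj_inl_inl (a b : W) :
    ¬ (rigidGraph W).Adj (.inl a) (.inl b) := id

@[simp] theorem rigidGraph_adj_inl_inr (a b : W) :
    (rigidGraph W).Adj (.inl a) (.inr b) ↔ b ≤ a := Iff.rfl

@[simp] theorem rigidGraph_adj_inr_inr (a b : W) :
    (rigidGraph W).Adj (.inr a) (.inr b) ↔ a ≠ b := Iff.rfl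

theorem isClique_neighborSet_rigidGraph_iff [NoMaxOrder W] (v : W ⊕ W) :
    (rigidGraph W).IsClique ((rigidGraph W).neighborSet v) ↔ v.isLeft := by
  rcases v with a | b
  · simp only [Sum.isLeft_inl, iff_true]
    rintro (x | x) hx (y | y) hy hxy <;> simp_all
  · simp only [Sum.isLeft_inr, Bool.false_eq_true, iff_false]
    obtain ⟨c, hbc⟩ := exists_gt b
    intro hclique
    exact rigidGraph_adj_inl_inl b c <| hclique
      ((rigidGraph_adj_inl_inr b b).2 le_rfl).symm
      ((rigidGraph_adj_inl_inr c b).2 hbc.le).symm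
      (Sum.inl_injective.ne hbc.ne)

theorem rigidGraph_iso_eq_refl [NoMaxOrder W] [WellFoundedLT W]
    (φ : rigidGraph W ≃g rigidGraph W) : φ = Iso.refl := by
  have hside (v : W ⊕ W) : (φ v).isLeft = v.isLeft := by
    rw [Bool.eq_iff_iff, ← isClique_neighborSet_rigidGraph_iff,
      ← isClique_neighborSet_rigidGraph_iff, φ.isClique_neighborSet_iff]
  obtain ⟨g, h, hφ⟩ := φ.toEquiv.exists_sumCongr_eq hside
  have hφ_apply (v : W ⊕ W) : φ v = Equiv.sumCongr g h v := by rw [hφ]; rfl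
  have hgh (a b : W) : h b ≤ g a ↔ b ≤ a := by
    simpa [hφ_apply] using φ.map_adj_iff (v := .inl a) (w := .inr b)
  obtain ⟨rfl, rfl⟩ := Equiv.eq_refl_of_apply_le_apply_iff g h hgh
  exact RelIso.ext fun v => by simp [hφ_apply]

end RigidGraph

/-- For every infinite set `X` there exists a simple graph whose vertex set has the same
cardinality as `X` and whose automorphism group is trivial: the only self-bijection of the
vertex set preserving adjacency in both directions is the identity. -/
theorem stmt_13 (X : Type u) [Infinite X] :
    ∃ (V : Type u) (G : SimpleGraph V),
      Cardinal.mk V = Cardinal.mk X ∧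
      ∀ f : V ≃ V, (∀ a b : V, G.Adj (f a) (f b) ↔ G.Adj a b) → f = Equiv.refl V := by
  have hX := aleph0_le_mk X
  have := Cardinal.noMaxOrder hX
  refine ⟨_ ⊕ _, rigidGraph (#X).ord.ToType, ?_,
    fun f hf => congrArg RelIso.toEquiv (rigidGraph_iso_eq_refl ⟨f, hf _ _⟩)⟩
  rw [← add_def, mk_ord_toType, add_eq_self hX]
end

section
/- For every integer n ≥ 3 there exists a metric space M with exactly n points that is generic, i.e., s(M) > 0, t(M) > 0, and e(M) > 0. (Such a space can be obtained from the n-point space with all distances 1 by perturbing the nonzero distances by pairwise distinct real numbers of absolute value at most 1/3.) -/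
open ENNReal

/-!
Perturb the equilateral space, all of whose distances are `1`, by an injective labelling `c` of
the unordered pairs with values in `[0, 1/2]`. All nonzero distances then lie in `[1, 3/2]`, so
the triangle inequality holds with slack at least `1/2` and `s ≥ 1`. Since distinct pairs have
distinct distances, an isometric bijection maps every pair to itself, which in presence of a
third point forces it to be the identity. Every other bijection thus has positive distortion, and
on a finite space the infimum of finitely many positive distortions is positive.
-/

open Function

variable {I : Type*}

lemma le_sVal_of_forall_ne [Nontrivial I] {d : I → I → ℝ} {a : ℝ}
    (h : ∀ i j, i ≠ j → a ≤ d i j) : a ≤ sVal d := by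
  obtain ⟨i, j, hij⟩ := exists_pair_ne I
  exact le_csInf ⟨_, i, j, hij, rfl⟩ (by rintro _ ⟨i, j, hij, rfl⟩; exact h i j hij)

lemma le_tVal_of_forall_ne {d : I → I → ℝ} {a : ℝ} (h3 : ∃ i j k : I, i ≠ j ∧ j ≠ k ∧ i ≠ k)
    (h : ∀ i j k, i ≠ j → j ≠ k → i ≠ k → a ≤ d i j + d j k - d i k) : a ≤ tVal d := by
  obtain ⟨i, j, k, hij, hjk, hik⟩ := h3
  exact le_csInf ⟨_, i, j, k, hij, hjk, hik, rfl⟩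
    (by rintro _ ⟨i, j, k, hij, hjk, hik, rfl⟩; exact h i j k hij hjk hik)

lemma Set.Finite.bot_lt_biInf {ι α : Type*} [CompleteLinearOrder α] [Nontrivial α] {S : Set ι}
    (hS : S.Finite) {g : ι → α} (h : ∀ i ∈ S, ⊥ < g i) : ⊥ < ⨅ i ∈ S, g i := by
  have hinf : ⨅ i ∈ S, g i = hS.toFinset.inf g := by simp [Finset.inf_eq_iInf]
  rw [hinf, Finset.lt_inf_iff bot_lt_top]
  simpa using h

lemma eVal_pos_of_forall_ne_refl [Finite I] {d : I → I → ℝ}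
    (h : ∀ f : I ≃ I, f ≠ Equiv.refl I → ∃ i j, d (f i) (f j) ≠ d i j) : 0 < eVal d := by
  refine (Set.toFinite _).bot_lt_biInf fun f hf => ?_
  obtain ⟨i, j, hij⟩ := h f hf
  calc (0 : ℝ≥0∞) < ENNReal.ofReal |d (f i) (f j) - d i j| :=
        ENNReal.ofReal_pos.mpr (abs_pos.mpr (sub_ne_zero.mpr hij))
    _ ≤ ⨆ i, ⨆ j, ENNReal.ofReal |d (f i) (f j) - d i j| :=
        le_iSup₂ (f := fun i j => ENNReal.ofReal |d (f i) (f j) - d i j|) i j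

/-- For a point `k` other than `i` and `f i`, the isometry `f` maps the pair `{k, i}` to itself,
and `f i = k` is excluded by the choice of `k`. -/
lemma eq_refl_of_isometry {d : I → I → ℝ} (h3 : 3 ≤ ENat.card I)
    (hd : ∀ i j k l, i ≠ j → k ≠ l → d i j = d k l → s(i, j) = s(k, l))
    {f : I ≃ I} (hf : ∀ i j, d (f i) (f j) = d i j) : f = Equiv.refl I := by
  ext i
  by_contra hfi
  obtain ⟨k, hki, hkfi⟩ := ENat.exists_ne_ne_of_three_le h3 i (f i)
  have hpair := hd _ _ _ _ (f.injective.ne hki) hki (hf k i)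
  rcases Sym2.eq_iff.mp hpair with ⟨-, h⟩ | ⟨-, h⟩
  · exact hfi h
  · exact hkfi h.symm

section Perturbation

variable [DecidableEq I]

def perturbedDist (c : Sym2 I → ℝ) (i j : I) : ℝ :=
  if i = j then 0 else 1 + c s(i, j)

variable {c : Sym2 I → ℝ}

lemma perturbedDist_of_ne {i j : I} (h : i ≠ j) : perturbedDist c i j = 1 + c s(i, j) :=
  if_neg h

lemma perturbedDist_comm (i j : I) : perturbedDist c i j = perturbedDist c j i := by
  unfold perturbedDist
  rw [Sym2.eq_swap]
  split_ifs <;> grind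

lemma isMetric_perturbedDist (hc : ∀ p, c p ∈ Set.Icc (0 : ℝ) 1) : IsMetric (perturbedDist c) := by
  refine ⟨perturbedDist_comm, fun i j => ?_, fun i j k => ?_⟩
  · by_cases h : i = j
    · simp [perturbedDist, h]
    · refine iff_of_false ?_ h
      rw [perturbedDist_of_ne h]
      linarith [(hc s(i, j)).1]
  · unfold perturbedDist
    split_ifs <;> grind

lemma perturbedDist_mem_Icc {ε : ℝ} (hc : ∀ p, c p ∈ Set.Icc 0 ε) {i j : I} (h : i ≠ j) :
    perturbedDist c i j ∈ Set.Icc 1 (1 + ε) := by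
  rw [perturbedDist_of_ne h]
  obtain ⟨h0, hε⟩ := hc s(i, j)
  constructor <;> linarith

lemma le_tVal_perturbedDist {ε : ℝ} (hc : ∀ p, c p ∈ Set.Icc 0 ε)
    (h3 : ∃ i j k : I, i ≠ j ∧ j ≠ k ∧ i ≠ k) : 1 - ε ≤ tVal (perturbedDist c) := by
  refine le_tVal_of_forall_ne h3 fun i j k hij hjk hik => ?_
  linarith [(perturbedDist_mem_Icc hc hij).1, (perturbedDist_mem_Icc hc hjk).1,
    (perturbedDist_mem_Icc hc hik).2]

lemma sym2_eq_of_perturbedDist_eq (hc : Injective c) {i j k l : I} (hij : i ≠ j) (hkl : k ≠ l)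
    (h : perturbedDist c i j = perturbedDist c k l) : s(i, j) = s(k, l) := by
  rw [perturbedDist_of_ne hij, perturbedDist_of_ne hkl] at h
  exact hc (add_left_cancel h)

end Perturbation

section PairCode

variable (I) [Fintype I]

noncomputable def pairCode (p : Sym2 I) : ℝ :=
  (Fintype.equivFin (Sym2 I) p : ℝ) / (2 * Fintype.card (Sym2 I))

lemma pairCode_injective : Injective (pairCode I) := by
  intro p q h
  have hN : (0 : ℝ) < 2 * Fintype.card (Sym2 I) := by
    have : Nonempty (Sym2 I) := ⟨p⟩
    positivity
  simp only [pairCode, div_left_inj' hN.ne', Nat.cast_inj, Fin.val_inj] at h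
  exact (Fintype.equivFin _).injective h

lemma pairCode_mem_Icc (p : Sym2 I) : pairCode I p ∈ Set.Icc 0 (1 / 2) := by
  have hN : (0 : ℝ) < Fintype.card (Sym2 I) := by
    have : Nonempty (Sym2 I) := ⟨p⟩
    positivity
  have hlt : ((Fintype.equivFin (Sym2 I) p : ℕ) : ℝ) < Fintype.card (Sym2 I) := by
    exact_mod_cast (Fintype.equivFin (Sym2 I) p).isLt
  refine ⟨by unfold pairCode; positivity, ?_⟩
  rw [pairCode, div_le_iff₀ (by positivity)]
  linarith

end PairCode

theorem exists_generic_metric [Fintype I] [DecidableEq I] (h3 : 3 ≤ Fintype.card I) :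
    ∃ d : I → I → ℝ, IsMetric d ∧ 0 < sVal d ∧ 0 < tVal d ∧ 0 < eVal d := by
  have hc := pairCode_mem_Icc I
  have hc1 (p : Sym2 I) : pairCode I p ∈ Set.Icc 0 1 := ⟨(hc p).1, (hc p).2.trans (by norm_num)⟩
  have : Nontrivial I := Fintype.one_lt_card_iff_nontrivial.mp (by omega)
  obtain ⟨a, b, c, hab, hac, hbc⟩ := Fintype.two_lt_card_iff.mp h3
  refine ⟨perturbedDist (pairCode I), isMetric_perturbedDist hc1, ?_, ?_, ?_⟩
  · exact one_pos.trans_le (le_sVal_of_forall_ne fun i j h => (perturbedDist_mem_Icc hc h).1)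
  · exact lt_of_lt_of_le (by norm_num) (le_tVal_perturbedDist hc ⟨a, b, c, hab, hbc, hac⟩)
  · refine eVal_pos_of_forall_ne_refl fun f hf => ?_
    by_contra! hiso
    refine hf (eq_refl_of_isometry ?_ (fun _ _ _ _ => ?_) hiso)
    · rw [ENat.card_eq_coe_fintype_card]
      exact_mod_cast h3
    · exact sym2_eq_of_perturbedDist_eq (pairCode_injective I)

/-- For every integer `n ≥ 3` there exists a generic metric space with exactly `n` points:
a metric `d` on `{1,…,n}` with `s > 0`, `t > 0`, and `e > 0`. -/
theorem stmt_14 (n : ℕ) (hn : 3 ≤ n) :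
    ∃ d : Fin n → Fin n → ℝ,
      IsMetric d ∧ 0 < sVal d ∧ 0 < tVal d ∧ 0 < eVal d :=
  exists_generic_metric (by simpa using hn)
end
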